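/- Let n ≥ 2 and let Y₁, …, Yₙ be i.i.d. random variables following the gamma distribution with shape parameter α > 0 and rate parameter λ > 0. Then the sample variance-to-mean ratio VMRₙ = (1/(n−1)) · (∑_{i=1}^n (Yᵢ − μₙ)²)/μₙ, where μₙ = (1/n)∑_{i=1}^n Yᵢ, is biased downward: E(VMRₙ) − 1/λ = −1/((nα + 1)λ) < 0. -/

import Mathlib

open MeasureTheory ProbabilityTheory
open Real Set Filter Topology
open scoped ENNReal

lemma lint_rpow_exp {p c : ℝ} (hp : 0 < p) (hc : 0 < c) :
    ∫⁻ x in Ioi (0:ℝ), ENNReal.ofReal (x ^ (p-1) * Real.exp (-(c*x))) =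
      ENNReal.ofReal ((1/c) ^ p * Real.Gamma p) := by
  rw [← ofReal_integral_eq_lintegral_ofReal, integral_rpow_mul_exp_neg_mul_Ioi hp hc]
  · have := integrableOn_rpow_mul_exp_neg_mul_rpow (p := 1) (s := p - 1) (b := c)
      (by linarith) zero_lt_one hc
    simpa [Real.rpow_one, neg_mul, IntegrableOn] using this
  · filter_upwards [ae_restrict_mem measurableSet_Ioi] with x hx
    have : (0:ℝ) < x := hx
    positivity

lemma lint_shift_rpow {q lam : ℝ} (hq : 1 < q) (hl : 0 < lam) :
    ∫⁻ u in Ioi (0:ℝ), ENNReal.ofReal ((lam + u) ^ (-q)) =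
      ENNReal.ofReal (lam ^ (1-q) / (q-1)) := by
  have hd : ∀ x ∈ Ici (0:ℝ), HasDerivAt (fun u => (lam+u)^(1-q)/(1-q)) ((lam+x)^(-q)) x := by
    intro x hx
    have hpos : (0:ℝ) < lam + x := by simp at hx; linarith
    have h1 : HasDerivAt (fun u : ℝ => lam + u) 1 x := (hasDerivAt_id x).const_add lam
    have h2 := (h1.rpow_const (p := 1-q) (Or.inl hpos.ne')).div_const (1-q)
    refine h2.congr_deriv ?_
    have : (1:ℝ) - q ≠ 0 := by linarith
    rw [show (1:ℝ) - q - 1 = -q by ring]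
    field_simp
  have ht : Tendsto (fun u => (lam+u)^(1-q)/(1-q)) atTop (𝓝 (0 / (1-q))) := by
    apply Tendsto.div_const
    have h0 : Tendsto (fun u : ℝ => lam + u) atTop atTop := tendsto_atTop_add_const_left _ _ tendsto_id
    have := (tendsto_rpow_neg_atTop (by linarith : (0:ℝ) < q - 1)).comp h0
    simpa [neg_sub, Function.comp_def] using this
  have hnn : ∀ t ∈ Ioi (0:ℝ), 0 ≤ (lam + t) ^ (-q) := fun t ht => rpow_nonneg (by simp at ht; linarith) _
  have hint : IntegrableOn (fun x : ℝ => (lam+x)^(-q)) (Ioi 0) :=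
    integrableOn_Ioi_deriv_of_nonneg' hd hnn ht
  rw [← ofReal_integral_eq_lintegral_ofReal hint]
  · rw [integral_Ioi_of_hasDerivAt_of_tendsto' hd hint ht]
    congr 1
    rw [add_zero, zero_div, zero_sub, show q-1 = -(1-q) by ring, div_neg]
  · filter_upwards [ae_restrict_mem measurableSet_Ioi] with x hx
    exact hnn x hx

lemma gamma_lap {α lam : ℝ} (hα : 0 < α) (hlam : 0 < lam) (k : ℕ) {u : ℝ} (hu : 0 ≤ u) :
    ∫⁻ x, ENNReal.ofReal (x ^ k * Real.exp (-(u*x))) ∂(gammaMeasure α lam) =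
      ENNReal.ofReal (lam ^ α / Real.Gamma α * ((1/(lam+u)) ^ (α+k) * Real.Gamma (α+k))) := by
  have hlu : (0:ℝ) < lam + u := by linarith
  have hmf : Measurable fun x : ℝ => ENNReal.ofReal (x ^ k * Real.exp (-(u*x))) := by
    fun_prop
  have hmd : Measurable (gammaPDF α lam) := (measurable_gammaPDFReal α lam).ennreal_ofReal
  rw [gammaMeasure, lintegral_withDensity_eq_lintegral_mul _ hmd hmf]
  have hsplit : ∫⁻ x, (gammaPDF α lam * fun x => ENNReal.ofReal (x ^ k * Real.exp (-(u*x)))) x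
      = ∫⁻ x in Ioi (0:ℝ),
        (gammaPDF α lam * fun x => ENNReal.ofReal (x ^ k * Real.exp (-(u*x)))) x := by
    rw [← lintegral_add_compl _ measurableSet_Ioi (μ := volume)]
    have h0 : ∫⁻ x in (Ioi (0:ℝ))ᶜ,
        (gammaPDF α lam * fun x => ENNReal.ofReal (x ^ k * Real.exp (-(u*x)))) x = 0 := by
      rw [compl_Ioi]
      have hne : ∀ᵐ x : ℝ ∂volume.restrict (Iic 0), x ≠ 0 :=
        ae_restrict_of_ae (ae_iff.mpr (by simp [Real.volume_singleton]))
      have hz : ∀ᵐ x : ℝ ∂volume.restrict (Iic 0),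
          (gammaPDF α lam * fun x => ENNReal.ofReal (x ^ k * Real.exp (-(u*x)))) x = 0 := by
        filter_upwards [ae_restrict_mem measurableSet_Iic, hne] with x hx hxne
        have : x < 0 := lt_of_le_of_ne hx hxne
        simp [gammaPDF_of_neg this]
      rw [lintegral_congr_ae hz, lintegral_zero]
    rw [h0, add_zero]
  rw [hsplit]
  have hpt : ∀ x ∈ Ioi (0:ℝ),
      (gammaPDF α lam * fun x => ENNReal.ofReal (x ^ k * Real.exp (-(u*x)))) x
        = ENNReal.ofReal (lam ^ α / Real.Gamma α)
          * ENNReal.ofReal (x ^ (α + k - 1) * Real.exp (-((lam+u)*x))) := by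
    intro x hx
    have hx' : (0:ℝ) < x := hx
    rw [Pi.mul_apply, gammaPDF_of_nonneg hx'.le,
      ← ENNReal.ofReal_mul (by positivity), ← ENNReal.ofReal_mul (by positivity)]
    congr 1
    rw [mul_assoc, mul_assoc]
    congr 1
    have hxk : (x:ℝ) ^ k = x ^ ((k:ℕ):ℝ) := by rw [Real.rpow_natCast]
    calc x ^ (α-1) * (Real.exp (-(lam*x)) * (x ^ k * Real.exp (-(u*x))))
        = (x ^ (α-1) * x ^ ((k:ℕ):ℝ)) * (Real.exp (-(lam*x)) * Real.exp (-(u*x))) := by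
          rw [hxk]; ring
      _ = x ^ (α + k - 1) * Real.exp (-((lam+u)*x)) := by
          rw [← Real.rpow_add hx', ← Real.exp_add]
          ring_nf
  rw [setLIntegral_congr_fun measurableSet_Ioi hpt,
    lintegral_const_mul _ (by fun_prop),
    show α + k - 1 = (α + k) - 1 by ring, lint_rpow_exp (by positivity) hlu,
    ← ENNReal.ofReal_mul (by positivity)]

lemma lintegral_pi_prod {n : ℕ} (μ : Measure ℝ) [SigmaFinite μ] (f : Fin n → ℝ → ℝ≥0∞)
    (hf : ∀ i, Measurable (f i)) :
    ∫⁻ y, ∏ i, f i (y i) ∂(Measure.pi fun _ => μ) = ∏ i, ∫⁻ x, f i x ∂μ := by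
  induction n with
  | zero => simp
  | succ m ih =>
      have hT := (measurePreserving_piFinSuccAbove (fun _ : Fin (m+1) => μ) 0)
      have key : ∫⁻ y, ∏ i, f i (y i) ∂(Measure.pi fun _ : Fin (m+1) => μ)
          = ∫⁻ z : ℝ × (Fin m → ℝ), f 0 z.1 * ∏ i : Fin m, f i.succ (z.2 i)
              ∂(μ.prod (Measure.pi fun _ : Fin m => μ)) := by
        rw [← hT.lintegral_comp (by fun_prop)]
        congr 1
        ext y
        rw [Fin.prod_univ_succ]
        congr 1
      rw [key, lintegral_prod_mul (f := f 0) (g := fun w : Fin m → ℝ => ∏ i, f i.succ (w i))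
          (hf 0).aemeasurable (Measurable.aemeasurable (by exact Finset.measurable_prod _ (fun i _ => (hf i.succ).comp (measurable_pi_apply i)))),
        ih (fun i => f i.succ) (fun i => hf i.succ), Fin.prod_univ_succ]

lemma map_eq_pi {Ω : Type*} [MeasurableSpace Ω] (P : Measure Ω) [IsProbabilityMeasure P]
    (n : ℕ) (Y : Fin n → Ω → ℝ) (hm : ∀ i, Measurable (Y i))
    (α lam : ℝ) (hα : 0 < α) (hlam : 0 < lam)
    (hindep : iIndepFun Y P)
    (hY : ∀ i, Measure.map (Y i) P = gammaMeasure α lam) :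
    Measure.map (fun ω i => Y i ω) P = Measure.pi (fun _ : Fin n => gammaMeasure α lam) := by
  haveI : IsProbabilityMeasure (gammaMeasure α lam) := isProbabilityMeasure_gammaMeasure hα hlam
  refine (Measure.pi_eq fun s hs => ?_).symm
  rw [Measure.map_apply (measurable_pi_lambda _ hm) (MeasurableSet.univ_pi hs)]
  have hpre : (fun ω i => Y i ω) ⁻¹' (Set.pi univ s) = ⋂ i ∈ Finset.univ, Y i ⁻¹' s i := by
    ext ω; simp [Set.mem_pi]
  rw [hpre, hindep.measure_inter_preimage_eq_mul Finset.univ (fun i _ => hs i)]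
  exact Finset.prod_congr rfl fun i _ => by
    rw [← hY i, Measure.map_apply (hm i) (hs i)]

lemma gammaMeasure_Iic_zero {α lam : ℝ} : gammaMeasure α lam (Iic 0) = 0 := by
  rw [gammaMeasure, withDensity_apply _ measurableSet_Iic]
  have hne : ∀ᵐ x : ℝ ∂volume.restrict (Iic 0), x ≠ 0 :=
    ae_restrict_of_ae (ae_iff.mpr (by simp [Real.volume_singleton]))
  have hz : ∀ᵐ x : ℝ ∂volume.restrict (Iic 0), gammaPDF α lam x = 0 := by
    filter_upwards [ae_restrict_mem measurableSet_Iic, hne] with x hx hxne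
    exact gammaPDF_of_neg (lt_of_le_of_ne hx hxne)
  rw [lintegral_congr_ae hz, lintegral_zero]

lemma pi_ae_pos {n : ℕ} {α lam : ℝ} (hα : 0 < α) (hlam : 0 < lam) :
    ∀ᵐ y : Fin n → ℝ ∂(Measure.pi fun _ => gammaMeasure α lam), ∀ i, 0 < y i := by
  haveI : IsProbabilityMeasure (gammaMeasure α lam) := isProbabilityMeasure_gammaMeasure hα hlam
  rw [ae_all_iff]
  intro i
  have hset : {y : Fin n → ℝ | ¬ 0 < y i} ⊆ Set.pi univ
      (fun j => if j = i then Iic 0 else univ) := by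
    intro y hy j _
    by_cases hj : j = i
    · subst hj; simpa [not_lt] using hy
    · simp [hj]
  refine measure_mono_null hset ?_
  rw [Measure.pi_pi]
  refine Finset.prod_eq_zero (Finset.mem_univ i) ?_
  simp [gammaMeasure_Iic_zero]

lemma alg_lemma {α lam u : ℝ} (hα : 0 < α) (hl : 0 < lam) (hu : 0 ≤ u) (n : ℕ) (hn : 1 ≤ n) :
    (lam ^ α / Gamma α * ((1/(lam+u)) ^ (α+2) * Gamma (α+2)))
      * (lam ^ α / Gamma α * ((1/(lam+u)) ^ α * Gamma α)) ^ (n-1)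
    = α * (α+1) * lam ^ ((n:ℝ)*α) * (lam+u) ^ (-((n:ℝ)*α+2)) := by
  have ht : (0:ℝ) < lam + u := by linarith
  have hG : Gamma α ≠ 0 := (Gamma_pos_of_pos hα).ne'
  have e1 : Gamma (α+2) = (α+1) * α * Gamma α := by
    rw [show α + 2 = (α+1) + 1 by ring, Gamma_add_one (by positivity), Gamma_add_one hα.ne']
    ring
  have e2 : lam ^ α / Gamma α * ((1/(lam+u)) ^ α * Gamma α) = lam ^ α * (lam+u) ^ (-α) := by
    rw [one_div, Real.inv_rpow ht.le, Real.rpow_neg ht.le]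
    field_simp
  have e3 : (lam ^ α * (lam+u) ^ (-α)) ^ (n-1)
      = lam ^ (α * ((n:ℝ)-1)) * (lam+u) ^ (-(α * ((n:ℝ)-1))) := by
    rw [mul_pow, ← Real.rpow_natCast (lam ^ α) (n-1), ← Real.rpow_natCast ((lam+u) ^ (-α)) (n-1),
      ← Real.rpow_mul hl.le, ← Real.rpow_mul ht.le]
    have : ((n-1 : ℕ) : ℝ) = (n:ℝ) - 1 := by
      push_cast [Nat.cast_sub hn]; ring
    rw [this]
    ring_nf
  rw [e2, e3, e1]
  have e4 : (1/(lam+u)) ^ (α+2) = (lam+u) ^ (-(α+2)) := by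
    rw [one_div, Real.inv_rpow ht.le, Real.rpow_neg ht.le]
  rw [e4]
  have e7 : lam ^ α / Gamma α * ((lam+u) ^ (-(α+2)) * ((α+1) * α * Gamma α))
      = α * (α+1) * (lam ^ α * (lam+u) ^ (-(α+2))) := by
    field_simp
  rw [e7]
  have e5 : lam ^ α * lam ^ (α * ((n:ℝ)-1)) = lam ^ ((n:ℝ)*α) := by
    rw [← Real.rpow_add hl]; ring_nf
  have e6 : (lam+u) ^ (-(α+2)) * (lam+u) ^ (-(α * ((n:ℝ)-1))) = (lam+u) ^ (-((n:ℝ)*α+2)) := by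
    rw [← Real.rpow_add ht]; ring_nf
  calc α * (α+1) * (lam ^ α * (lam+u) ^ (-(α+2)))
        * (lam ^ (α * ((n:ℝ)-1)) * (lam+u) ^ (-(α * ((n:ℝ)-1))))
      = α * (α+1) * ((lam ^ α * lam ^ (α * ((n:ℝ)-1)))
          * ((lam+u) ^ (-(α+2)) * (lam+u) ^ (-(α * ((n:ℝ)-1))))) := by ring
    _ = α * (α+1) * (lam ^ ((n:ℝ)*α) * (lam+u) ^ (-((n:ℝ)*α+2))) := by rw [e5, e6]
    _ = α * (α+1) * lam ^ ((n:ℝ)*α) * (lam+u) ^ (-((n:ℝ)*α+2)) := by ring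

lemma inv_eq {S A : ℝ} (hS : 0 < S) (hA : 0 ≤ A) :
    ∫⁻ u in Ioi (0:ℝ), ENNReal.ofReal (A * Real.exp (-(u*S))) = ENNReal.ofReal (A/S) := by
  have h1 : ∫⁻ u in Ioi (0:ℝ), ENNReal.ofReal (Real.exp (-(S*u))) = ENNReal.ofReal (1/S) := by
    have := lint_rpow_exp (p := 1) (c := S) one_pos hS
    simpa [Real.rpow_one, Real.Gamma_one] using this
  calc ∫⁻ u in Ioi (0:ℝ), ENNReal.ofReal (A * Real.exp (-(u*S)))
      = ∫⁻ u in Ioi (0:ℝ), ENNReal.ofReal A * ENNReal.ofReal (Real.exp (-(S*u))) := by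
        congr 1; ext u; rw [← ENNReal.ofReal_mul hA, mul_comm u S]
    _ = ENNReal.ofReal A * ∫⁻ u in Ioi (0:ℝ), ENNReal.ofReal (Real.exp (-(S*u))) :=
        lintegral_const_mul _ (by fun_prop)
    _ = ENNReal.ofReal (A/S) := by rw [h1, ← ENNReal.ofReal_mul hA, mul_one_div]

lemma lint_sum_sq_exp {n : ℕ} {α lam u : ℝ} (hα : 0 < α) (hl : 0 < lam) (hu : 0 ≤ u)
    (hn : 1 ≤ n) :
    ∫⁻ y : Fin n → ℝ, ENNReal.ofReal ((∑ i, (y i)^2) * Real.exp (-(u * ∑ j, y j)))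
        ∂(Measure.pi fun _ => gammaMeasure α lam)
    = n * ENNReal.ofReal (α * (α+1) * lam ^ ((n:ℝ)*α) * (lam+u) ^ (-((n:ℝ)*α+2))) := by
  haveI : IsProbabilityMeasure (gammaMeasure α lam) := isProbabilityMeasure_gammaMeasure hα hl
  have hpt : ∀ y : Fin n → ℝ,
      ENNReal.ofReal ((∑ i, (y i)^2) * Real.exp (-(u * ∑ j, y j)))
        = ∑ i, ENNReal.ofReal ((y i)^2 * Real.exp (-(u * ∑ j, y j))) := by
    intro y
    rw [Finset.sum_mul, ENNReal.ofReal_sum_of_nonneg]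
    intro i _
    positivity
  simp_rw [hpt]
  rw [lintegral_finset_sum _ (fun i _ => by fun_prop)]
  have hterm : ∀ i : Fin n,
      ∫⁻ y : Fin n → ℝ, ENNReal.ofReal ((y i)^2 * Real.exp (-(u * ∑ j, y j)))
          ∂(Measure.pi fun _ => gammaMeasure α lam)
        = ENNReal.ofReal (α * (α+1) * lam ^ ((n:ℝ)*α) * (lam+u) ^ (-((n:ℝ)*α+2))) := by
    intro i
    have hprod : ∀ y : Fin n → ℝ,
        ENNReal.ofReal ((y i)^2 * Real.exp (-(u * ∑ j, y j)))
          = ∏ j, ENNReal.ofReal ((if j = i then (y j)^2 else 1) * Real.exp (-(u * y j))) := by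
      intro y
      rw [← ENNReal.ofReal_prod_of_nonneg (fun j _ => by positivity)]
      congr 1
      rw [Finset.prod_mul_distrib, Finset.prod_ite_eq' Finset.univ i (fun j => (y j)^2),
        ← Real.exp_sum]
      simp [Finset.mul_sum]
    simp_rw [hprod]
    rw [lintegral_pi_prod (gammaMeasure α lam)
      (fun j x => ENNReal.ofReal ((if j = i then x^2 else 1) * Real.exp (-(u * x))))
      (fun j => by by_cases hj : j = i <;> simp [hj] <;> fun_prop)]
    have hval : ∀ j : Fin n,
        (∫⁻ x : ℝ, ENNReal.ofReal ((if j = i then x^2 else 1) * Real.exp (-(u * x)))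
            ∂(gammaMeasure α lam))
          = if j = i
            then ENNReal.ofReal (lam ^ α / Gamma α * ((1/(lam+u)) ^ (α+2) * Gamma (α+2)))
            else ENNReal.ofReal (lam ^ α / Gamma α * ((1/(lam+u)) ^ α * Gamma α)) := by
      intro j
      by_cases hj : j = i
      · simp only [hj, if_pos rfl]
        have := gamma_lap hα hl 2 hu
        simpa using this
      · simp only [if_neg hj]
        have := gamma_lap hα hl 0 hu
        simpa using this
    simp_rw [hval]
    rw [← Finset.mul_prod_erase Finset.univ _ (Finset.mem_univ i), if_pos rfl]
    rw [Finset.prod_congr rfl (fun j hj => if_neg (Finset.ne_of_mem_erase hj)),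
      Finset.prod_const, Finset.card_erase_of_mem (Finset.mem_univ i), Finset.card_univ,
      Fintype.card_fin, ← ENNReal.ofReal_pow (by positivity),
      ← ENNReal.ofReal_mul (by positivity), alg_lemma hα hl hu n hn]
  simp_rw [hterm]
  rw [Finset.sum_const, Finset.card_univ, Fintype.card_fin, nsmul_eq_mul]

lemma gamma_mean {α lam : ℝ} (hα : 0 < α) (hl : 0 < lam) :
    ∫⁻ x, ENNReal.ofReal x ∂(gammaMeasure α lam) = ENNReal.ofReal (α/lam) := by
  have := gamma_lap hα hl 1 (le_refl (0:ℝ))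
  have hval : lam ^ α / Real.Gamma α * ((1/(lam+0)) ^ (α+(1:ℕ)) * Real.Gamma (α+(1:ℕ)))
      = α/lam := by
    push_cast
    rw [add_zero, Real.Gamma_add_one hα.ne', one_div, Real.inv_rpow hl.le,
      Real.rpow_add hl, Real.rpow_one]
    have hG : Real.Gamma α ≠ 0 := (Real.Gamma_pos_of_pos hα).ne'
    have h1 : lam ^ α ≠ 0 := (Real.rpow_pos_of_pos hl α).ne'
    field_simp
  rw [hval] at this
  rw [← this]
  congr 1
  ext x
  simp

lemma lint_sum {n : ℕ} {α lam : ℝ} (hα : 0 < α) (hl : 0 < lam) :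
    ∫⁻ y : Fin n → ℝ, ENNReal.ofReal (∑ j, y j) ∂(Measure.pi fun _ => gammaMeasure α lam)
      = n * ENNReal.ofReal (α/lam) := by
  haveI : IsProbabilityMeasure (gammaMeasure α lam) := isProbabilityMeasure_gammaMeasure hα hl
  have hae : ∀ᵐ y : Fin n → ℝ ∂(Measure.pi fun _ => gammaMeasure α lam),
      ENNReal.ofReal (∑ j, y j) = ∑ j, ENNReal.ofReal (y j) := by
    filter_upwards [pi_ae_pos hα hl] with y hy
    exact ENNReal.ofReal_sum_of_nonneg (fun j _ => (hy j).le)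
  rw [lintegral_congr_ae hae, lintegral_finset_sum _ (fun j _ => by fun_prop)]
  have hcoord : ∀ j : Fin n,
      ∫⁻ y : Fin n → ℝ, ENNReal.ofReal (y j) ∂(Measure.pi fun _ => gammaMeasure α lam)
        = ENNReal.ofReal (α/lam) := by
    intro j
    have hpt : ∀ y : Fin n → ℝ, ENNReal.ofReal (y j)
        = ∏ l, (fun l x => if l = j then ENNReal.ofReal x else 1) l (y l) := by
      intro y
      simp [Finset.prod_ite_eq' Finset.univ j (fun l => ENNReal.ofReal (y l))]
    simp_rw [hpt]
    rw [lintegral_pi_prod (gammaMeasure α lam)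
      (fun l x => if l = j then ENNReal.ofReal x else 1)
      (fun l => by by_cases hl' : l = j <;> simp [hl'] <;> fun_prop)]
    have hval : ∀ l : Fin n, (∫⁻ x, (fun l (x:ℝ) => if l = j then ENNReal.ofReal x else 1) l x
        ∂(gammaMeasure α lam)) = if l = j then ENNReal.ofReal (α/lam) else 1 := by
      intro l
      by_cases hl' : l = j
      · simp only [hl', if_pos rfl]; exact gamma_mean hα hl
      · simp [hl']
    simp_rw [hval]
    simp [Finset.prod_ite_eq' Finset.univ j (fun _ => ENNReal.ofReal (α/lam))]
  simp_rw [hcoord]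
  simp [Finset.sum_const]

lemma key {n : ℕ} {α lam : ℝ} (hn : 2 ≤ n) (hα : 0 < α) (hl : 0 < lam) :
    ∫⁻ y : Fin n → ℝ, ENNReal.ofReal ((1/((n:ℝ)-1)) *
        ((∑ i, (y i - (1/(n:ℝ)) * ∑ j, y j)^2) / ((1/(n:ℝ)) * ∑ j, y j)))
        ∂(Measure.pi fun _ => gammaMeasure α lam)
      = ENNReal.ofReal (((n:ℝ)*α) / (((n:ℝ)*α+1)*lam)) := by
  haveI : IsProbabilityMeasure (gammaMeasure α lam) := isProbabilityMeasure_gammaMeasure hα hl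
  set pm := (Measure.pi fun _ : Fin n => gammaMeasure α lam) with hpmdef
  have hn1 : (0:ℝ) < (n:ℝ) - 1 := by
    have : (2:ℝ) ≤ (n:ℝ) := by exact_mod_cast hn
    linarith
  have hn0 : (0:ℝ) < (n:ℝ) := by linarith
  have hq : (1:ℝ) < (n:ℝ)*α + 2 := by nlinarith
  haveI : Nonempty (Fin n) := ⟨⟨0, by omega⟩⟩
  -- the three a.e. identities
  have hae : ∀ᵐ y : Fin n → ℝ ∂pm,
      ENNReal.ofReal ((1/((n:ℝ)-1)) *
          ((∑ i, (y i - (1/(n:ℝ)) * ∑ j, y j)^2) / ((1/(n:ℝ)) * ∑ j, y j)))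
        + ENNReal.ofReal ((∑ j, y j) / ((n:ℝ)-1))
      = ENNReal.ofReal (((n:ℝ)/((n:ℝ)-1)) * ((∑ i, (y i)^2) / (∑ j, y j))) := by
    filter_upwards [pi_ae_pos hα hl] with y hy
    set S := ∑ j, y j with hS
    have hSpos : 0 < S := Finset.sum_pos (fun i _ => hy i) Finset.univ_nonempty
    have hsq : ∑ i, (y i - (1/(n:ℝ)) * S)^2
        = (∑ i, (y i)^2) - (1/(n:ℝ)) * S^2 := by
      have hexp : ∀ i : Fin n, (y i - (1/(n:ℝ)) * S)^2
          = (y i)^2 - (2*(1/(n:ℝ))*S) * (y i) + ((1/(n:ℝ))*S)^2 := fun i => by ring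
      rw [Finset.sum_congr rfl (fun i _ => hexp i), Finset.sum_add_distrib,
        Finset.sum_sub_distrib, ← Finset.mul_sum, Finset.sum_const, Finset.card_univ,
        Fintype.card_fin, nsmul_eq_mul, ← hS]
      field_simp
      ring
    have hg0 : 0 ≤ (1/((n:ℝ)-1)) * ((∑ i, (y i - (1/(n:ℝ)) * S)^2) / ((1/(n:ℝ)) * S)) := by
      have : 0 ≤ ∑ i, (y i - (1/(n:ℝ)) * S)^2 := Finset.sum_nonneg (fun i _ => sq_nonneg _)
      positivity
    rw [← ENNReal.ofReal_add hg0 (by positivity)]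
    congr 1
    rw [hsq]
    field_simp
    ring
  -- value of the main term
  have hmain : ∫⁻ y : Fin n → ℝ, ENNReal.ofReal (((n:ℝ)/((n:ℝ)-1)) *
      ((∑ i, (y i)^2) / (∑ j, y j))) ∂pm
      = ENNReal.ofReal ((n:ℝ)/((n:ℝ)-1)) * (n *
          (ENNReal.ofReal (α * (α+1) * lam ^ ((n:ℝ)*α))
            * ENNReal.ofReal (lam ^ (1-((n:ℝ)*α+2)) / (((n:ℝ)*α+2)-1)))) := by
    have hsplit : ∀ᵐ y : Fin n → ℝ ∂pm,
        ENNReal.ofReal (((n:ℝ)/((n:ℝ)-1)) * ((∑ i, (y i)^2) / (∑ j, y j)))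
          = ENNReal.ofReal ((n:ℝ)/((n:ℝ)-1))
            * ∫⁻ u in Ioi (0:ℝ), ENNReal.ofReal ((∑ i, (y i)^2)
                * Real.exp (-(u * ∑ j, y j))) := by
      filter_upwards [pi_ae_pos hα hl] with y hy
      have hSpos : 0 < ∑ j, y j := Finset.sum_pos (fun i _ => hy i) Finset.univ_nonempty
      rw [inv_eq hSpos (Finset.sum_nonneg (fun i _ => sq_nonneg _)),
        ENNReal.ofReal_mul (by positivity)]
    rw [lintegral_congr_ae hsplit, lintegral_const_mul' _ _ ENNReal.ofReal_ne_top]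
    congr 1
    rw [lintegral_lintegral_swap (by fun_prop)]
    have hinner : ∀ u ∈ Ioi (0:ℝ),
        ∫⁻ y : Fin n → ℝ, ENNReal.ofReal ((∑ i, (y i)^2) * Real.exp (-(u * ∑ j, y j))) ∂pm
          = n * (ENNReal.ofReal (α * (α+1) * lam ^ ((n:ℝ)*α))
              * ENNReal.ofReal ((lam+u) ^ (-((n:ℝ)*α+2)))) := by
      intro u hu
      rw [lint_sum_sq_exp hα hl (le_of_lt hu) (by omega), ENNReal.ofReal_mul (by positivity)]
    rw [setLIntegral_congr_fun measurableSet_Ioi hinner]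
    rw [lintegral_const_mul _ (by fun_prop), lintegral_const_mul _ (by fun_prop),
      lint_shift_rpow hq hl]
  -- value of the linear term
  have hlin : ∫⁻ y : Fin n → ℝ, ENNReal.ofReal ((∑ j, y j) / ((n:ℝ)-1)) ∂pm
      = ENNReal.ofReal (1/((n:ℝ)-1)) * (n * ENNReal.ofReal (α/lam)) := by
    have : ∀ y : Fin n → ℝ, ENNReal.ofReal ((∑ j, y j) / ((n:ℝ)-1))
        = ENNReal.ofReal (1/((n:ℝ)-1)) * ENNReal.ofReal (∑ j, y j) := by
      intro y
      rw [← ENNReal.ofReal_mul (by positivity), one_div_mul_eq_div]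
    simp_rw [this]
    rw [lintegral_const_mul _ (by fun_prop), lint_sum hα hl]
  have hXm : Measurable fun y : Fin n → ℝ => ENNReal.ofReal ((1/((n:ℝ)-1)) *
      ((∑ i, (y i - (1/(n:ℝ)) * ∑ j, y j)^2) / ((1/(n:ℝ)) * ∑ j, y j))) := by fun_prop
  have hadd : (∫⁻ y, ENNReal.ofReal ((1/((n:ℝ)-1)) *
        ((∑ i, (y i - (1/(n:ℝ)) * ∑ j, y j)^2) / ((1/(n:ℝ)) * ∑ j, y j))) ∂pm)
        + (∫⁻ y, ENNReal.ofReal ((∑ j, y j)/((n:ℝ)-1)) ∂pm)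
      = ∫⁻ y, ENNReal.ofReal (((n:ℝ)/((n:ℝ)-1)) * ((∑ i, (y i)^2)/(∑ j, y j))) ∂pm := by
    rw [← lintegral_add_left hXm]
    exact lintegral_congr_ae hae
  have hfin : (∫⁻ y, ENNReal.ofReal ((∑ j, y j)/((n:ℝ)-1)) ∂pm) ≠ ⊤ := by
    rw [hlin]
    exact ENNReal.mul_ne_top ENNReal.ofReal_ne_top
      (ENNReal.mul_ne_top (ENNReal.natCast_ne_top n) ENNReal.ofReal_ne_top)
  have heq := ENNReal.eq_sub_of_add_eq hfin hadd
  rw [heq, hmain, hlin]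
  have hC : (0:ℝ) < ((n:ℝ)*α+2)-1 := by nlinarith
  have hlam1 : lam ^ ((n:ℝ)*α) * lam ^ (1-((n:ℝ)*α+2)) = 1/lam := by
    rw [← Real.rpow_add hl, show (n:ℝ)*α + (1-((n:ℝ)*α+2)) = -1 by ring,
      Real.rpow_neg_one, one_div]
  have hc23 : (α * (α+1) * lam ^ ((n:ℝ)*α))
      * (lam ^ (1-((n:ℝ)*α+2)) / (((n:ℝ)*α+2)-1))
      = α * (α+1) / (lam * (((n:ℝ)*α+2)-1)) := by
    calc (α * (α+1) * lam ^ ((n:ℝ)*α)) * (lam ^ (1-((n:ℝ)*α+2)) / (((n:ℝ)*α+2)-1))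
        = α * (α+1) * (lam ^ ((n:ℝ)*α) * lam ^ (1-((n:ℝ)*α+2))) / (((n:ℝ)*α+2)-1) := by
          ring
      _ = α * (α+1) / (lam * (((n:ℝ)*α+2)-1)) := by
          rw [hlam1]; field_simp
  rw [← ENNReal.ofReal_mul (by positivity), hc23,
    show ((n:ℕ) : ℝ≥0∞) = ENNReal.ofReal ((n:ℕ):ℝ) by simp,
    ← ENNReal.ofReal_mul (by positivity), ← ENNReal.ofReal_mul (by positivity),
    ← ENNReal.ofReal_mul (by positivity), ← ENNReal.ofReal_mul (by positivity),
    ← ENNReal.ofReal_sub _ (by positivity)]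
  congr 1
  have hnz1 : ((n:ℝ)-1) ≠ 0 := ne_of_gt hn1
  have hnz2 : lam ≠ 0 := ne_of_gt hl
  have hnz3 : ((n:ℝ)*α+1) ≠ 0 := by nlinarith
  field_simp
  ring

/-- For `n ≥ 2` i.i.d. samples `Y₁, …, Yₙ` from the gamma distribution
with shape `α > 0` and rate `lam > 0`, the sample variance-to-mean ratio
`VMRₙ = (1/(n−1)) · (∑ᵢ (Yᵢ − μₙ)²) / μₙ` with `μₙ = (1/n)∑ᵢ Yᵢ` is biased downward:
`E(VMRₙ) − 1/lam = −1/((nα + 1) lam) < 0`. -/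
theorem sample_vmr_gamma_biased_downward
    {Ω : Type*} [MeasurableSpace Ω] (P : Measure Ω) [IsProbabilityMeasure P]
    (n : ℕ) (hn : 2 ≤ n) (Y : Fin n → Ω → ℝ) (hm : ∀ i, Measurable (Y i))
    (α lam : ℝ) (hα : 0 < α) (hlam : 0 < lam)
    (hindep : iIndepFun Y P)
    (hY : ∀ i, Measure.map (Y i) P = gammaMeasure α lam)
    (μₙ : Ω → ℝ) (hμₙ : μₙ = fun ω => (1 / (n : ℝ)) * ∑ i : Fin n, Y i ω) :
    (∫ ω, (1 / ((n : ℝ) - 1)) * ((∑ i : Fin n, (Y i ω - μₙ ω) ^ 2) / μₙ ω) ∂P) - 1 / lam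
        = -(1 / (((n : ℝ) * α + 1) * lam)) ∧
      -(1 / (((n : ℝ) * α + 1) * lam)) < 0 := by
  haveI : IsProbabilityMeasure (gammaMeasure α lam) := isProbabilityMeasure_gammaMeasure hα hlam
  have hn0 : (0:ℝ) < (n:ℝ) := by positivity
  have hn1 : (0:ℝ) < (n:ℝ) - 1 := by
    have : (2:ℝ) ≤ (n:ℝ) := by exact_mod_cast hn
    linarith
  have hna : (0:ℝ) < (n:ℝ)*α + 1 := by positivity
  set g : (Fin n → ℝ) → ℝ := fun y => (1/((n:ℝ)-1)) *
      ((∑ i, (y i - (1/(n:ℝ)) * ∑ j, y j)^2) / ((1/(n:ℝ)) * ∑ j, y j)) with hg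
  have hgm : Measurable g := by fun_prop
  have hmap := map_eq_pi P n Y hm α lam hα hlam hindep hY
  have hint : (∫ ω, (1 / ((n : ℝ) - 1)) * ((∑ i : Fin n, (Y i ω - μₙ ω) ^ 2) / μₙ ω) ∂P)
      = ∫ y, g y ∂(Measure.pi fun _ : Fin n => gammaMeasure α lam) := by
    rw [← hmap, integral_map (measurable_pi_lambda _ hm).aemeasurable
      hgm.aestronglyMeasurable]
    subst hμₙ
    rfl
  have hnonneg : 0 ≤ᵐ[Measure.pi fun _ : Fin n => gammaMeasure α lam] g := by
    filter_upwards [pi_ae_pos hα hlam (n := n)] with y hy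
    haveI : Nonempty (Fin n) := ⟨⟨0, by omega⟩⟩
    have hSpos : 0 < ∑ j, y j := Finset.sum_pos (fun i _ => hy i) Finset.univ_nonempty
    have hnum : 0 ≤ ∑ i, (y i - (1/(n:ℝ)) * ∑ j, y j)^2 :=
      Finset.sum_nonneg (fun i _ => sq_nonneg _)
    simp only [hg]
    positivity
  have hval : ∫ y, g y ∂(Measure.pi fun _ : Fin n => gammaMeasure α lam)
      = ((n:ℝ)*α) / (((n:ℝ)*α+1)*lam) := by
    rw [integral_eq_lintegral_of_nonneg_ae hnonneg hgm.aestronglyMeasurable]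
    rw [show (fun y => ENNReal.ofReal (g y)) = fun y => ENNReal.ofReal ((1/((n:ℝ)-1)) *
        ((∑ i, (y i - (1/(n:ℝ)) * ∑ j, y j)^2) / ((1/(n:ℝ)) * ∑ j, y j))) from rfl]
    rw [key hn hα hlam, ENNReal.toReal_ofReal (by positivity)]
  constructor
  · rw [hint, hval]
    field_simp
    ring
  · have : 0 < 1 / (((n:ℝ)*α + 1) * lam) := by positivity
    linarith
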